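/- arXiv:2208.00610 — 5 statements merged into one kernel-verified Lean document; each statement's English description precedes it below -/
import Mathlib

section
/- For $n \geq 2$, the non-commuting graph of the generalized quaternion group $Q_{4n}$ is the complete $(n+1)$-partite graph $K_{2n-2,2,2,\ldots,2}$ (with $n$ parts of size $2$). -/
/-- The non-commuting graph of a group: vertices are the non-central elements,
two vertices adjacent iff they do not commute. -/
def noncommGraph (G : Type*) [Group G] :
    SimpleGraph {g : G // g ∉ Subgroup.center G} where
  Adj u v := u.1 * v.1 ≠ v.1 * u.1
  symm := ⟨fun _ _ h e => h e.symm⟩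
  loopless := ⟨fun _ h => h rfl⟩

/-!
Two non-central elements of `Q_{4n}` commute exactly when they lie in the same maximal abelian
subgroup: the cyclic subgroup `⟨a 1⟩`, or one of the `n` subgroups
`⟨xa j⟩ = {1, a n, xa j, xa (j + n)}`, which depends only on `j mod n`. So non-adjacency means
"same part" for the partition of the non-central elements into those of `⟨a 1⟩` and the `n`
pairs `{xa j, xa (j + n)}`. Both the centre `{a 0, a n}` and these pairs are governed by the kernel
`{0, n}` of `ZMod (2n) → ZMod n`, which is also the solution set of `x + x = 0`; it has two
elements, whence the part sizes `2n - 2` and `2`.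
-/

namespace SimpleGraph

variable {V ι : Type*}

def isoCompleteMultipartiteGraphOfAdjIff {β : ι → Type*} (G : SimpleGraph V) (p : V → ι)
    (hadj : ∀ u v, G.Adj u v ↔ p u ≠ p v) (e : ∀ i, {v // p v = i} ≃ β i) :
    G ≃g completeMultipartiteGraph β where
  toEquiv := (Equiv.sigmaFiberEquiv p).symm.trans (Equiv.sigmaCongrRight e)
  map_rel_iff' {u v} := (hadj u v).symm

theorem nonempty_iso_completeMultipartiteGraph_of_card [Finite V] (G : SimpleGraph V)
    (p : V → ι) (hadj : ∀ u v, G.Adj u v ↔ p u ≠ p v) {k : ι → ℕ}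
    (hk : ∀ i, Nat.card {v // p v = i} = k i) :
    Nonempty (G ≃g completeMultipartiteGraph fun i => Fin (k i)) :=
  ⟨G.isoCompleteMultipartiteGraphOfAdjIff p hadj fun i =>
    (Finite.card_eq.mp ((hk i).trans (Nat.card_fin _).symm)).some⟩

end SimpleGraph

namespace ZMod

variable {n : ℕ}

theorem one_add_one_eq_zero_iff : (1 + 1 : ZMod (2 * n)) = 0 ↔ n = 1 := by
  have h : (1 + 1 : ZMod (2 * n)) = ((2 * 1 : ℕ) : ZMod (2 * n)) := by push_cast; ring
  rw [h, natCast_eq_zero_iff, Nat.mul_dvd_mul_iff_left two_pos, Nat.dvd_one]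

theorem ncard_preimage_castHom_mul {m k : ℕ} [NeZero m] (h : m ∣ k) (c : ZMod m) :
    (castHom h (ZMod m) ⁻¹' {c}).ncard * m = k := by
  set f := (castHom h (ZMod m)).toAddMonoidHom
  have hf : f.range = ⊤ := AddMonoidHom.range_eq_top.mpr (castHom_surjective h)
  calc (f ⁻¹' {c}).ncard * m = Nat.card f.ker * f.ker.index := by
        rw [AddSubgroup.index_ker, hf, AddSubgroup.card_top, Nat.card_zmod,
          ← Nat.card_coe_set_eq,
          Nat.card_congr (f.fiberEquivKerOfSurjective (castHom_surjective h) c)]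
    _ = k := by rw [AddSubgroup.card_mul_index, Nat.card_zmod]

variable [NeZero n]

theorem castHom_eq_zero_iff_add_self_eq_zero (x : ZMod (2 * n)) :
    castHom (dvd_mul_left n 2) (ZMod n) x = 0 ↔ x + x = 0 := by
  have hx : x + x = ((2 * x.val : ℕ) : ZMod (2 * n)) := by
    push_cast [natCast_zmod_val]; ring
  rw [castHom_apply, cast_eq_val, natCast_eq_zero_iff, hx, natCast_eq_zero_iff,
    Nat.mul_dvd_mul_iff_left two_pos]

theorem ncard_preimage_castHom_two_mul (c : ZMod n) :
    (castHom (dvd_mul_left n 2) (ZMod n) ⁻¹' {c}).ncard = 2 :=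
  Nat.eq_of_mul_eq_mul_right (NeZero.pos n) (ncard_preimage_castHom_mul _ c)

theorem ncard_setOf_add_self_eq_zero : {x : ZMod (2 * n) | x + x = 0}.ncard = 2 := by
  convert ncard_preimage_castHom_two_mul (0 : ZMod n) using 2
  ext x
  exact (castHom_eq_zero_iff_add_self_eq_zero x).symm

end ZMod

namespace QuaternionGroup

variable {n : ℕ}

theorem commute_a_a (i j : ZMod (2 * n)) : Commute (a i) (a j) := by
  rw [Commute, SemiconjBy, a_mul_a, a_mul_a, add_comm]

theorem commute_a_xa_iff (i j : ZMod (2 * n)) : Commute (a i) (xa j) ↔ i + i = 0 := by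
  rw [Commute, SemiconjBy, a_mul_xa, xa_mul_a, xa.injEq, sub_eq_add_neg, add_right_inj,
    neg_eq_iff_add_eq_zero]

theorem commute_xa_xa_iff (i j : ZMod (2 * n)) :
    Commute (xa i) (xa j) ↔ (i - j) + (i - j) = 0 := by
  rw [Commute, SemiconjBy, xa_mul_xa, xa_mul_xa, a.injEq]
  constructor <;> intro h <;> linear_combination -h

theorem a_mem_center_iff (i : ZMod (2 * n)) :
    a i ∈ Subgroup.center (QuaternionGroup n) ↔ i + i = 0 := by
  rw [Subgroup.mem_center_iff]
  refine ⟨fun h => (commute_a_xa_iff i 0).mp (h (xa 0)).symm, fun h g => ?_⟩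
  cases g with
  | a j => exact commute_a_a j i
  | xa j => exact ((commute_a_xa_iff i j).mpr h).symm

theorem xa_notMem_center (hn : n ≠ 1) (j : ZMod (2 * n)) :
    xa j ∉ Subgroup.center (QuaternionGroup n) := fun h =>
  hn <| ZMod.one_add_one_eq_zero_iff.mp <|
    (commute_a_xa_iff 1 j).mp (Subgroup.mem_center_iff.mp h (a 1))

variable [NeZero n]

def centralizerIndex : QuaternionGroup n → Fin (n + 1)
  | a _ => 0
  | xa j => ((ZMod.finEquiv n).symm (ZMod.castHom (dvd_mul_left n 2) (ZMod n) j)).succ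

theorem commute_iff_centralizerIndex_eq {g h : QuaternionGroup n}
    (hg : g ∉ Subgroup.center (QuaternionGroup n))
    (hh : h ∉ Subgroup.center (QuaternionGroup n)) :
    Commute g h ↔ centralizerIndex g = centralizerIndex h := by
  cases g with
  | a i =>
    cases h with
    | a j => exact iff_of_true (commute_a_a i j) rfl
    | xa j =>
      rw [commute_a_xa_iff, ← a_mem_center_iff]
      exact iff_of_false hg (Fin.succ_ne_zero _).symm
  | xa i =>
    cases h with
    | a j =>
      rw [Commute.symm_iff, commute_a_xa_iff, ← a_mem_center_iff]
      exact iff_of_false hh (Fin.succ_ne_zero _)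
    | xa j =>
      rw [commute_xa_xa_iff, centralizerIndex, centralizerIndex, Fin.succ_inj,
        EmbeddingLike.apply_eq_iff_eq, ← ZMod.castHom_eq_zero_iff_add_self_eq_zero, map_sub,
        sub_eq_zero]

theorem ncard_noncentral_centralizerIndex_eq_zero :
    {g : QuaternionGroup n | g ∉ Subgroup.center _ ∧ centralizerIndex g = 0}.ncard =
      2 * n - 2 := by
  have h : {g : QuaternionGroup n | g ∉ Subgroup.center _ ∧ centralizerIndex g = 0} =
      a '' {i | i + i = 0}ᶜ := by
    ext g
    cases g <;> simp [a_mem_center_iff, centralizerIndex]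
  rw [h, Set.ncard_image_of_injective _ fun _ _ => a.inj, Set.ncard_compl,
    ZMod.ncard_setOf_add_self_eq_zero, Nat.card_zmod]

theorem ncard_noncentral_centralizerIndex_eq_succ (hn : n ≠ 1) (k : Fin n) :
    {g : QuaternionGroup n | g ∉ Subgroup.center _ ∧ centralizerIndex g = k.succ}.ncard =
      2 := by
  have h : {g : QuaternionGroup n | g ∉ Subgroup.center _ ∧ centralizerIndex g = k.succ} =
      xa '' (ZMod.castHom (dvd_mul_left n 2) (ZMod n) ⁻¹' {ZMod.finEquiv n k}) := by
    ext g
    cases g <;> simp [xa_notMem_center hn, centralizerIndex, RingEquiv.symm_apply_eq,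
      (Fin.succ_ne_zero k).symm]
  rw [h, Set.ncard_image_of_injective _ fun _ _ => xa.inj, ZMod.ncard_preimage_castHom_two_mul]

end QuaternionGroup

open QuaternionGroup in
/-- For `n ≥ 2`, the non-commuting graph of the generalized quaternion group `Q_{4n}`
is the complete `(n+1)`-partite graph `K_{2n-2,2,2,…,2}` with `n` parts of size `2`. -/
theorem noncommGraph_quaternionGroup (n : ℕ) (hn : 2 ≤ n) :
    Nonempty (noncommGraph (QuaternionGroup n) ≃g
      SimpleGraph.completeMultipartiteGraph
        fun i : Fin (n + 1) => Fin (if i = 0 then 2 * n - 2 else 2)) := by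
  have : NeZero n := ⟨by omega⟩
  refine (noncommGraph _).nonempty_iso_completeMultipartiteGraph_of_card
    (fun v => centralizerIndex v.1) (fun u v => (commute_iff_centralizerIndex_eq u.2 v.2).not)
    fun i => ?_
  refine (Nat.card_congr (Equiv.subtypeSubtypeEquivSubtypeInter (· ∉ Subgroup.center _)
    (centralizerIndex · = i))).trans ?_
  cases i using Fin.cases with
  | zero => rw [if_pos rfl]; exact ncard_noncentral_centralizerIndex_eq_zero
  | succ k =>
    rw [if_neg (Fin.succ_ne_zero k)]
    exact ncard_noncentral_centralizerIndex_eq_succ (by omega) k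
end

section
/- For $n \geq 4$, the distance spectrum of the non-commuting graph of the quasidihedral group $QD_{2^n}$, i.e. of $K_{2^{n-1}-2,2,\ldots,2}$ with $2^{n-2}$ parts of size 2, consists of $-2$ with multiplicity $3\cdot 2^{n-2}-3$, $0$ with multiplicity $2^{n-2}-1$, and the two simple eigenvalues $3(2^{n-2}-1) \pm \sqrt{5\cdot(2^{n-2})^2 - 10\cdot 2^{n-2} + 9}$. -/
/-!
Let `D` be the distance matrix of a complete multipartite graph with parts `V i`, `E` the
vertex–part incidence matrix and `J` the all-ones matrix on the parts. Distances are `1` between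
parts and `2` inside a part, so `D + 2 = E (1 + J) Eᵀ`. Since `AB` and `BA` have the same
characteristic polynomial up to a power of `X`, this reduces `charpoly D` to the characteristic
polynomial of `Eᵀ E (1 + J) = diag |V i| + (|V i|)ᵢ 1ᵀ`, a diagonal plus a rank-one matrix,
which the matrix determinant lemma computes. For `K_{m,2,…,2}` with `q` parts of size `2` what
remains besides `(X + 2) ^ (m + q - 1) * X ^ (q - 1)` is a quadratic; for `m = 2q - 2` its roots
are `3(q - 1) ± √(5q² - 10q + 9)`.
-/

open Polynomial

/-- The distance matrix of a graph, with real entries. -/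
noncomputable def distMatrix {V : Type*} [Fintype V] (G : SimpleGraph V) : Matrix V V ℝ :=
  Matrix.of fun u v => (G.dist u v : ℝ)

open Matrix Finset

theorem charpoly_diagonal_add_vecMulVec {n R : Type*} [Fintype n] [DecidableEq n] [Field R]
    [Infinite R] (d u v : n → R) :
    (diagonal d + vecMulVec u v).charpoly =
      ∏ i, (X - C (d i)) - ∑ i, C (u i * v i) * ∏ j ∈ univ.erase i, (X - C (d j)) := by
  refine eq_of_infinite_eval_eq _ _ ((Set.finite_range d).infinite_compl.mono fun t ht => ?_)
  have hd : ∀ i, t - d i ≠ 0 := fun i h => ht ⟨i, (sub_eq_zero.mp h).symm⟩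
  have hfactor : scalar n t - (diagonal d + vecMulVec u v) = diagonal (fun i => t - d i) *
      (1 + vecMulVec (fun i => -u i / (t - d i)) v) := by
    ext i j
    rcases eq_or_ne i j with rfl | hij
    · simp only [scalar_apply, Matrix.sub_apply, Matrix.add_apply, diagonal_apply_eq, diagonal_mul,
        vecMulVec_apply, one_apply_eq]
      field_simp [hd i]
      ring
    · simp only [scalar_apply, Matrix.sub_apply, Matrix.add_apply, diagonal_apply_ne _ hij,
        diagonal_mul, vecMulVec_apply, one_apply_ne hij]
      field_simp [hd i]
      ring
  rw [Set.mem_ofPred_eq, eval_charpoly, hfactor, det_mul, det_diagonal, vecMulVec_eq Unit,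
    det_one_add_replicateCol_mul_replicateRow]
  simp only [eval_sub, eval_prod, eval_finsetSum, eval_mul, eval_C, eval_X, dotProduct, mul_add,
    mul_one, Finset.mul_sum]
  rw [sub_eq_add_neg, ← Finset.sum_neg_distrib]
  congr 1
  refine Finset.sum_congr rfl fun i _ => ?_
  rw [← Finset.mul_prod_erase univ (fun j => t - d j) (mem_univ i)]
  field_simp [hd i]

namespace Matrix

variable {ι : Type*} (V : ι → Type*) (R : Type*) [DecidableEq ι]

def fstIncidence [Zero R] [One R] : Matrix (Σ i, V i) ι R :=
  of fun v i => if v.1 = i then 1 else 0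

variable [Fintype ι] [Semiring R]

theorem fstIncidence_mul_mul_transpose_apply (M : Matrix ι ι R) (u v : Σ i, V i) :
    (fstIncidence V R * M * (fstIncidence V R)ᵀ) u v = M u.1 v.1 := by
  simp [fstIncidence, mul_apply]

theorem fstIncidence_transpose_mul [∀ i, Fintype (V i)] :
    (fstIncidence V R)ᵀ * fstIncidence V R = diagonal fun i => (Fintype.card (V i) : R) := by
  ext i j
  rcases eq_or_ne i j with rfl | hij
  · simp [fstIncidence, mul_apply, ← Finset.univ_sigma_univ, Finset.sum_sigma]
  · rw [diagonal_apply_ne _ hij, mul_apply]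
    refine Finset.sum_eq_zero fun v _ => ?_
    by_cases hv : v.1 = i <;> simp [fstIncidence, hv, hij]

end Matrix

namespace SimpleGraph

variable {ι : Type*} {V : ι → Type*}

theorem completeMultipartiteGraph_dist_of_fst_ne {u v : Σ i, V i} (h : u.1 ≠ v.1) :
    (completeMultipartiteGraph V).dist u v = 1 :=
  dist_eq_one_iff_adj.mpr h

theorem completeMultipartiteGraph_dist_of_fst_eq {u v w : Σ i, V i} (huv : u ≠ v)
    (h : u.1 = v.1) (hw : w.1 ≠ u.1) : (completeMultipartiteGraph V).dist u v = 2 := by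
  have : (completeMultipartiteGraph V).edist u v = 2 :=
    edist_eq_two_iff.mpr
      ⟨huv, by simpa using h, w, by simp [mem_commonNeighbors, hw.symm, h ▸ hw.symm]⟩
  simp [dist, this]

end SimpleGraph

open SimpleGraph

section

variable {ι : Type*} {V : ι → Type*} [Fintype ι] [DecidableEq ι] [∀ i, Fintype (V i)]
  [∀ i, DecidableEq (V i)]

theorem distMatrix_completeMultipartiteGraph [Nontrivial ι] [∀ i, Nonempty (V i)] :
    distMatrix (completeMultipartiteGraph V) =
      fstIncidence V ℝ * (1 + of fun _ _ => 1 : Matrix ι ι ℝ) * (fstIncidence V ℝ)ᵀ -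
        scalar _ 2 := by
  ext u v
  rw [Matrix.sub_apply, fstIncidence_mul_mul_transpose_apply, distMatrix, of_apply]
  by_cases huv : u = v
  · norm_num [huv]
  by_cases h : u.1 = v.1
  · obtain ⟨j, hj⟩ := exists_ne u.1
    rw [completeMultipartiteGraph_dist_of_fst_eq (w := ⟨j, Classical.arbitrary _⟩) huv h hj]
    norm_num [huv, h]
  · simp [completeMultipartiteGraph_dist_of_fst_ne h, huv, h]

theorem charpoly_distMatrix_completeMultipartiteGraph [Nontrivial ι] [∀ i, Nonempty (V i)] :
    (distMatrix (completeMultipartiteGraph V)).charpoly =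
      (X + 2) ^ (Fintype.card (Σ i, V i) - Fintype.card ι) *
        (∏ i, (X + 2 - (Fintype.card (V i) : ℝ[X])) -
          ∑ i, (Fintype.card (V i) : ℝ[X]) *
            ∏ j ∈ univ.erase i, (X + 2 - (Fintype.card (V j) : ℝ[X]))) := by
  have hcard : Fintype.card ι ≤ Fintype.card (Σ i, V i) :=
    Fintype.card_le_of_injective (fun i => ⟨i, Classical.arbitrary _⟩) fun _ _ h =>
      congrArg Sigma.fst h
  have hdiag :
      (fstIncidence V ℝ)ᵀ * (fstIncidence V ℝ * (1 + of fun _ _ => 1 : Matrix ι ι ℝ)) =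
      diagonal (fun i => (Fintype.card (V i) : ℝ)) +
        vecMulVec (fun i => (Fintype.card (V i) : ℝ)) 1 := by
    rw [← Matrix.mul_assoc, fstIncidence_transpose_mul, Matrix.mul_add, Matrix.mul_one]
    ext i j
    simp
  rw [distMatrix_completeMultipartiteGraph, charpoly_sub_scalar, charpoly_mul_comm_of_le _ _ hcard,
    hdiag, charpoly_diagonal_add_vecMulVec]
  simp [Polynomial.prod_comp, Polynomial.sum_comp, C_ofNat]

end

theorem charpoly_distMatrix_completeMultipartiteGraph_pairs (q m : ℕ) (hq : 0 < q)
    (hm : 0 < m) :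
    (distMatrix (completeMultipartiteGraph
        fun i : Fin (q + 1) => Fin (if i = 0 then m else 2))).charpoly =
      (X + 2) ^ (m + q - 1) * X ^ (q - 1) *
        (X ^ 2 - C (2 * ((m : ℝ) + q - 1)) * X + C (2 * q * ((m : ℝ) - 2))) := by
  obtain ⟨p, rfl⟩ : ∃ p, q = p + 1 := ⟨q - 1, by omega⟩
  have : Nontrivial (Fin (p + 2)) := Fin.nontrivial_iff_two_le.mpr le_add_self
  have : ∀ i : Fin (p + 2), Nonempty (Fin (if i = 0 then m else 2)) := fun i => by
    split_ifs
    exacts [⟨⟨0, hm⟩⟩, ⟨0⟩]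
  have hbig : X + 2 - (m : ℝ[X]) ≠ 0 := by
    simpa [sub_eq_add_neg, add_assoc, C_ofNat] using X_add_C_ne_zero (2 - m : ℝ)
  have hprod : ∏ j : Fin (p + 2), (X + 2 - if j = 0 then (m : ℝ[X]) else 2) =
      (X + 2 - (m : ℝ[X])) * X ^ (p + 1) := by
    simp [Fin.prod_univ_succ (n := p + 1), Fin.succ_ne_zero]
  have herase_zero :
      ∏ j ∈ univ.erase (0 : Fin (p + 2)), (X + 2 - if j = 0 then (m : ℝ[X]) else 2) =
        X ^ (p + 1) :=
    mul_left_cancel₀ hbig (by simpa using (mul_prod_erase _ _ (mem_univ 0)).trans hprod)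
  have herase_succ (k : Fin (p + 1)) :
      ∏ j ∈ univ.erase k.succ, (X + 2 - if j = 0 then (m : ℝ[X]) else 2) =
        (X + 2 - (m : ℝ[X])) * X ^ p :=
    mul_left_cancel₀ X_ne_zero (by
      linear_combination (by simpa [Fin.succ_ne_zero] using
        (mul_prod_erase _ _ (mem_univ k.succ)).trans hprod : _ = _))
  have hcard : Fintype.card (Σ i : Fin (p + 2), Fin (if i = 0 then m else 2)) -
      Fintype.card (Fin (p + 2)) = m + p := by
    simp only [Fintype.card_sigma, Fintype.card_fin, Fin.sum_univ_succ (n := p + 1), ↓reduceIte,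
      Fin.succ_ne_zero, sum_const, card_univ, smul_eq_mul]
    omega
  rw [charpoly_distMatrix_completeMultipartiteGraph, hcard]
  simp only [Fintype.card_fin, Nat.cast_ite, Nat.cast_ofNat, hprod, Fin.sum_univ_succ (n := p + 1),
    herase_zero, herase_succ, Fin.succ_ne_zero, if_true, if_false, sum_const, card_univ,
    nsmul_eq_mul, Nat.add_succ_sub_one, Nat.add_sub_cancel, map_mul, map_sub, map_add, map_natCast,
    map_one, C_ofNat]
  push_cast
  ring

/-- For `n ≥ 4`, the distance spectrum of the non-commuting graph of `QD_{2^n}`,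
i.e. of `K_{2^(n-1)-2,2,…,2}` with `2^(n-2)` parts of size `2`, consists of `-2` with
multiplicity `3·2^(n-2)-3`, `0` with multiplicity `2^(n-2)-1`, and the two simple
eigenvalues `3(2^(n-2)-1) ± √(5·(2^(n-2))² - 10·2^(n-2) + 9)`. -/
theorem distance_spectrum_quasidihedral (n : ℕ) (hn : 4 ≤ n) :
    (distMatrix (SimpleGraph.completeMultipartiteGraph
        fun i : Fin (2 ^ (n - 2) + 1) => Fin (if i = 0 then 2 ^ (n - 1) - 2 else 2))).charpoly =
      (X + 2) ^ (3 * 2 ^ (n - 2) - 3) * X ^ (2 ^ (n - 2) - 1) *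
        (X - C (3 * ((2 : ℝ) ^ (n - 2) - 1) +
          Real.sqrt (5 * ((2 : ℝ) ^ (n - 2)) ^ 2 - 10 * (2 : ℝ) ^ (n - 2) + 9))) *
        (X - C (3 * ((2 : ℝ) ^ (n - 2) - 1) -
          Real.sqrt (5 * ((2 : ℝ) ^ (n - 2)) ^ 2 - 10 * (2 : ℝ) ^ (n - 2) + 9))) := by
  have hq : 4 ≤ 2 ^ (n - 2) :=
    le_trans (by norm_num : 4 ≤ 2 ^ 2) (Nat.pow_le_pow_right two_pos (by omega))
  have hm : 2 ^ (n - 1) - 2 = 2 * 2 ^ (n - 2) - 2 := by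
    rw [show n - 1 = n - 2 + 1 by omega, pow_succ']
  set Q : ℝ := 2 ^ (n - 2) with hQ
  have hmQ : ((2 ^ (n - 1) - 2 : ℕ) : ℝ) = 2 * Q - 2 := by
    rw [hm, Nat.cast_sub (by omega), hQ]
    push_cast
    ring
  have hr : Real.sqrt (5 * Q ^ 2 - 10 * Q + 9) ^ 2 = 5 * Q ^ 2 - 10 * Q + 9 :=
    Real.sq_sqrt (by nlinarith [sq_nonneg (Q - 1)])
  rw [charpoly_distMatrix_completeMultipartiteGraph_pairs _ _ (by omega) (by omega),
    show 2 ^ (n - 1) - 2 + 2 ^ (n - 2) - 1 = 3 * 2 ^ (n - 2) - 3 by omega, mul_assoc _ (_ - _)]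
  congr 1
  push_cast [hmQ, ← hQ]
  have hCr := congrArg C hr
  simp only [map_add, map_sub, map_mul, map_pow, C_ofNat, map_one] at hCr ⊢
  linear_combination hCr
end

section
/- For $n \geq 4$, the distance Laplacian spectrum of the non-commuting graph of $QD_{2^n}$, i.e. of $K_{2^{n-1}-2,2,\ldots,2}$ with $2^{n-2}$ parts of size 2, consists of $0$ with multiplicity $1$, $2^n-2$ and $2^n$ each with multiplicity $2^{n-2}$, and $2^n + 2^{n-1} - 4$ with multiplicity $2^{n-1}-3$. In particular this graph is distance Laplacian integral. -/
open Polynomial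

/-- The distance Laplacian matrix `Tr(G) - D(G)`. -/
noncomputable def distLapMatrix {V : Type*} [Fintype V] [DecidableEq V] (G : SimpleGraph V) :
    Matrix V V ℝ :=
  Matrix.diagonal (fun v => ∑ u, (G.dist v u : ℝ)) - distMatrix G

/-! In a complete multipartite graph with at least two parts, all nonempty, distinct vertices are
at distance `1` or `2` according as they lie in different parts or in the same one. With `N`
vertices, part sizes `sᵢ`, all-ones matrix `J` and part-incidence matrix `E` this gives
`D^L = diag (N + s_{part u}) - J - E Eᵀ`, so `t - D^L = A + J` with
`A = diag (t - N - s_{part u}) + E Eᵀ`. The matrix determinant lemma reduces `det A` to the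
diagonal `ι × ι` matrix `1 + Eᵀ diag (…)⁻¹ E`, giving `det A = ∏ᵢ (t - N - sᵢ) ^ (sᵢ - 1) (t - N)`,
and since `A 𝟙 = (t - N) 𝟙` it also gives `det (A + J) = det A · t / (t - N)`. So the
characteristic polynomial has roots `0`, `N` with multiplicity `#parts - 1` and `N + sᵢ` with
multiplicity `sᵢ - 1`, as both sides agree at every large `t`. -/

open Matrix

namespace Matrix

theorem det_add_vecMulVec_one_of_mulVec_one {n K : Type*} [Fintype n] [DecidableEq n]
    [Field K] {A : Matrix n n K} (hA : IsUnit A.det) {μ : K} (hμ : μ ≠ 0) (h : A *ᵥ 1 = μ • 1) :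
    (A + vecMulVec 1 1).det = A.det * (1 + Fintype.card n / μ) := by
  have hinv : A⁻¹ *ᵥ 1 = μ⁻¹ • 1 := by
    have h1 : A⁻¹ *ᵥ (A *ᵥ 1) = 1 := by rw [mulVec_mulVec, nonsing_inv_mul _ hA, one_mulVec]
    rw [h, mulVec_smul] at h1
    simpa [smul_smul, hμ] using congrArg (μ⁻¹ • ·) h1
  rw [vecMulVec_eq Unit, det_add_replicateCol_mul_replicateRow hA, det_unique (n := Unit),
    Matrix.mul_assoc, ← replicateCol_mulVec, hinv, add_apply, one_apply_eq,
    replicateRow_mul_replicateCol_apply]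
  simp [div_eq_inv_mul]

variable {ι : Type*} [DecidableEq ι] (α : ι → Type*)

def partIncidence (R : Type*) [Zero R] [One R] : Matrix (Σ i, α i) ι R :=
  of fun u i => if u.1 = i then 1 else 0

variable {α} [Fintype ι]

theorem partIncidence_mul_transpose_apply {R : Type*} [NonAssocSemiring R] (u v : Σ i, α i) :
    (partIncidence α R * (partIncidence α R)ᵀ) u v = if u.1 = v.1 then 1 else 0 := by
  simp [partIncidence, mul_apply, eq_comm]

variable [∀ i, Fintype (α i)]

theorem sum_partIncidence_mul_transpose_apply {R : Type*} [NonAssocSemiring R] (u : Σ i, α i) :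
    ∑ v, (partIncidence α R * (partIncidence α R)ᵀ) u v = Fintype.card (α u.1) := by
  simp only [partIncidence_mul_transpose_apply]
  rw [Fintype.sum_sigma, Finset.sum_eq_single u.1 (fun i _ hi => by simp [Ne.symm hi]) (by simp)]
  simp

variable [∀ i, DecidableEq (α i)]

theorem transpose_partIncidence_mul_diagonal_mul {R : Type*} [CommSemiring R] (c : ι → R) :
    (partIncidence α R)ᵀ * diagonal (fun u : Σ i, α i => c u.1) * partIncidence α R =
      diagonal fun i => Fintype.card (α i) * c i := by
  ext i j
  rw [mul_apply, Fintype.sum_sigma]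
  by_cases h : i = j
  · simp [partIncidence, h]
  · simp [partIncidence, h, Ne.symm h]

theorem det_diagonal_add_partIncidence_mul_transpose {K : Type*} [Field K] [∀ i, Nonempty (α i)]
    {c : ι → K} (hc : ∀ i, c i ≠ 0) :
    (diagonal (fun u : Σ i, α i => c u.1) + partIncidence α K * (partIncidence α K)ᵀ).det =
      ∏ i, c i ^ (Fintype.card (α i) - 1) * (c i + Fintype.card (α i)) := by
  have hdet : (diagonal fun u : Σ i, α i => c u.1).det = ∏ i, c i ^ Fintype.card (α i) := by
    simp [det_diagonal, Fintype.prod_sigma]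
  have hinv : (diagonal fun u : Σ i, α i => c u.1)⁻¹ = diagonal fun u => (c u.1)⁻¹ :=
    inv_eq_left_inv <| by simp [diagonal_mul_diagonal, hc]
  rw [det_add_mul _ _ (by simp [hdet, Finset.prod_ne_zero_iff, hc]), hinv, hdet,
    transpose_partIncidence_mul_diagonal_mul fun i => (c i)⁻¹, ← diagonal_one, diagonal_add,
    det_diagonal, ← Finset.prod_mul_distrib]
  refine Finset.prod_congr rfl fun i _ => ?_
  obtain ⟨s, hs⟩ := Nat.exists_eq_add_one.mpr (Fintype.card_pos (α := α i))
  rw [hs, Nat.add_sub_cancel, pow_succ]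
  field_simp [hc i]

end Matrix

namespace SimpleGraph

variable {ι : Type*} [DecidableEq ι] {α : ι → Type*} [∀ i, DecidableEq (α i)]

theorem dist_completeMultipartiteGraph [Nontrivial ι] [∀ i, Nonempty (α i)] (u v : Σ i, α i) :
    (completeMultipartiteGraph α).dist u v = if u = v then 0 else if u.1 = v.1 then 2 else 1 := by
  split_ifs with huv hpart
  · simp [huv]
  · obtain ⟨j, hj⟩ := exists_ne u.1
    let w : Σ i, α i := ⟨j, Classical.arbitrary _⟩
    have huw : (completeMultipartiteGraph α).Adj u w := hj.symm
    have hwv : (completeMultipartiteGraph α).Adj w v := show j ≠ v.1 from hpart ▸ hj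
    have hle := dist_le (huw.toWalk.append hwv.toWalk)
    have hlt := (huw.reachable.trans hwv.reachable).one_lt_dist_of_ne_of_not_adj huv (by simpa)
    simp only [Walk.length_append, Adj.length_toWalk] at hle
    omega
  · exact dist_eq_one_iff_adj.mpr hpart

variable [Fintype ι] [∀ i, Fintype (α i)]

theorem distMatrix_completeMultipartiteGraph [Nontrivial ι] [∀ i, Nonempty (α i)] :
    distMatrix (completeMultipartiteGraph α) =
      vecMulVec 1 1 + partIncidence α ℝ * (partIncidence α ℝ)ᵀ - (2 : ℝ) • 1 := by
  ext u v
  rw [distMatrix, of_apply, dist_completeMultipartiteGraph, Matrix.sub_apply, Matrix.add_apply,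
    Matrix.smul_apply, vecMulVec_apply, partIncidence_mul_transpose_apply, one_apply]
  by_cases huv : u = v
  · norm_num [huv]
  · by_cases hpart : u.1 = v.1 <;> norm_num [huv, hpart]

theorem distLapMatrix_completeMultipartiteGraph [Nontrivial ι] [∀ i, Nonempty (α i)] :
    distLapMatrix (completeMultipartiteGraph α) =
      diagonal (fun u => (Fintype.card (Σ i, α i) + Fintype.card (α u.1) : ℝ)) -
        vecMulVec 1 1 - partIncidence α ℝ * (partIncidence α ℝ)ᵀ := by
  have htrans (u : Σ i, α i) : ∑ v, ((completeMultipartiteGraph α).dist u v : ℝ) =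
      Fintype.card (Σ i, α i) + Fintype.card (α u.1) - 2 := by
    change ∑ v, distMatrix _ u v = _
    simp [distMatrix_completeMultipartiteGraph, Finset.sum_sub_distrib, Finset.sum_add_distrib,
      sum_partIncidence_mul_transpose_apply, one_apply]
  rw [distLapMatrix, funext htrans, distMatrix_completeMultipartiteGraph]
  ext u v
  simp only [Matrix.sub_apply, Matrix.add_apply, Matrix.smul_apply, diagonal_apply, one_apply]
  split_ifs <;> simp <;> ring

theorem charpoly_distLapMatrix_completeMultipartiteGraph [Nontrivial ι] [∀ i, Nonempty (α i)] :
    (distLapMatrix (completeMultipartiteGraph α)).charpoly =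
      X * (X - C (Fintype.card (Σ i, α i) : ℝ)) ^ (Fintype.card ι - 1) *
        ∏ i, (X - C (Fintype.card (Σ i, α i) + Fintype.card (α i) : ℝ)) ^
          (Fintype.card (α i) - 1) := by
  set N : ℝ := (Fintype.card (Σ i, α i) : ℝ)
  apply eq_of_infinite_eval_eq
  refine (Set.Ioi_infinite (2 * N)).mono fun t (ht : 2 * N < t) => ?_
  have hpart (i : ι) : (Fintype.card (α i) : ℝ) ≤ N := by
    simp only [N]
    exact_mod_cast Fintype.card_le_of_injective (fun a : α i => (⟨i, a⟩ : Σ i, α i))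
      sigma_mk_injective
  have hN : 0 ≤ N := by positivity
  have htN : t - N ≠ 0 := by linarith
  set c : ι → ℝ := fun i => t - N - Fintype.card (α i)
  have hc (i : ι) : c i ≠ 0 := by have := hpart i; simp only [c]; linarith
  set A := diagonal (fun u : Σ i, α i => c u.1) + partIncidence α ℝ * (partIncidence α ℝ)ᵀ
  have hA1 : A *ᵥ 1 = (t - N) • 1 := by
    ext u
    rw [add_mulVec, Pi.add_apply, mulVec_diagonal]
    simp only [mulVec, dotProduct, Pi.one_apply, mul_one, sum_partIncidence_mul_transpose_apply,
      Pi.smul_apply, smul_eq_mul, c]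
    ring
  have hdetA : A.det = ∏ i, c i ^ (Fintype.card (α i) - 1) * (t - N) := by
    rw [det_diagonal_add_partIncidence_mul_transpose hc]
    simp [c]
  have hM : scalar _ t - distLapMatrix (completeMultipartiteGraph α) = A + vecMulVec 1 1 := by
    rw [distLapMatrix_completeMultipartiteGraph]
    ext u v
    simp only [A, c, Matrix.sub_apply, Matrix.add_apply, scalar_apply, diagonal_apply,
      vecMulVec_apply, Pi.one_apply, mul_one]
    split_ifs <;> ring
  have hunit : IsUnit A.det := by
    simp [hdetA, Finset.prod_ne_zero_iff, hc, htN]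
  rw [Set.mem_ofPred_eq, eval_charpoly, hM, det_add_vecMulVec_one_of_mulVec_one hunit htN hA1,
    hdetA]
  have hc' (i : ι) : t - (N + Fintype.card (α i)) = c i := by simp only [c]; ring
  simp only [eval_mul, eval_X, eval_pow, eval_sub, eval_C, eval_prod, hc',
    Finset.prod_mul_distrib, Finset.prod_const, Finset.card_univ]
  obtain ⟨p, hp⟩ := Nat.exists_eq_add_one.mpr (Fintype.card_pos (α := ι))
  rw [hp, pow_succ, Nat.add_sub_cancel]
  field_simp
  ring

theorem charpoly_distLapMatrix_completeMultipartiteGraph_pairs {m k : ℕ} (hm : 1 ≤ m)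
    (hk : 1 ≤ k) :
    (distLapMatrix (completeMultipartiteGraph
        fun i : Fin (k + 1) => Fin (if i = 0 then m else 2))).charpoly =
      X * (X - C ((m : ℝ) + 2 * k)) ^ k * (X - C ((m : ℝ) + 2 * k + 2)) ^ k *
        (X - C (2 * (m : ℝ) + 2 * k)) ^ (m - 1) := by
  have : Nontrivial (Fin (k + 1)) := Fin.nontrivial_iff_two_le.mpr (by omega)
  have (i : Fin (k + 1)) : Nonempty (Fin (if i = 0 then m else 2)) := by
    split_ifs <;> exact ⟨⟨0, by omega⟩⟩
  have hcard :
      (Fintype.card (Σ i : Fin (k + 1), Fin (if i = 0 then m else 2)) : ℝ) = m + 2 * k := by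
    simp [Fintype.card_sigma, Fin.sum_univ_succ, Fin.succ_ne_zero]
    ring
  rw [charpoly_distLapMatrix_completeMultipartiteGraph, hcard, Fintype.card_fin,
    Nat.add_sub_cancel, Fin.prod_univ_succ]
  simp only [Fin.succ_ne_zero, if_true, if_false, Fintype.card_fin, Finset.prod_const,
    Finset.card_univ, Nat.cast_ofNat, Nat.add_one_sub_one, pow_one]
  rw [show (m : ℝ) + 2 * k + m = 2 * m + 2 * k by ring]
  ring

end SimpleGraph

/-- For `n ≥ 4`, the distance Laplacian spectrum of the non-commuting graph of `QD_{2^n}`,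
i.e. of `K_{2^(n-1)-2,2,…,2}` with `2^(n-2)` parts of size `2`, consists of `0` with
multiplicity `1`, `2^n-2` and `2^n` each with multiplicity `2^(n-2)`, and `2^n+2^(n-1)-4`
with multiplicity `2^(n-1)-3`; in particular the graph is distance Laplacian integral. -/
theorem distLaplacian_spectrum_quasidihedral (n : ℕ) (hn : 4 ≤ n) :
    (distLapMatrix (SimpleGraph.completeMultipartiteGraph
        fun i : Fin (2 ^ (n - 2) + 1) => Fin (if i = 0 then 2 ^ (n - 1) - 2 else 2))).charpoly =
      X * (X - C ((2 : ℝ) ^ n - 2)) ^ (2 ^ (n - 2)) * (X - C ((2 : ℝ) ^ n)) ^ (2 ^ (n - 2)) *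
        (X - C ((2 : ℝ) ^ n + (2 : ℝ) ^ (n - 1) - 4)) ^ (2 ^ (n - 1) - 3) ∧
    ∀ μ ∈ (distLapMatrix (SimpleGraph.completeMultipartiteGraph
        fun i : Fin (2 ^ (n - 2) + 1) =>
          Fin (if i = 0 then 2 ^ (n - 1) - 2 else 2))).charpoly.roots,
      ∃ z : ℤ, μ = (z : ℝ) := by
  have hpow : 2 ≤ 2 ^ (n - 2) := Nat.le_self_pow (by omega) 2
  have h1 : 2 ^ (n - 1) = 2 * 2 ^ (n - 2) := by rw [← pow_succ']; congr 1; omega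
  have h1' : (2 : ℝ) ^ (n - 1) = 2 * 2 ^ (n - 2) := by exact_mod_cast h1
  have h0' : (2 : ℝ) ^ n = 2 * 2 ^ (n - 1) := by rw [← pow_succ']; congr 1; omega
  have hm : ((2 ^ (n - 1) - 2 : ℕ) : ℝ) = 2 ^ (n - 1) - 2 := by
    rw [Nat.cast_sub (by omega)]; push_cast; ring
  have hcharpoly := SimpleGraph.charpoly_distLapMatrix_completeMultipartiteGraph_pairs
    (m := 2 ^ (n - 1) - 2) (k := 2 ^ (n - 2)) (by omega) (by omega)
  rw [hm, show 2 ^ (n - 1) - 2 - 1 = 2 ^ (n - 1) - 3 by omega] at hcharpoly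
  push_cast at hcharpoly
  have hN : (2 : ℝ) ^ (n - 1) - 2 + 2 * 2 ^ (n - 2) = 2 ^ n - 2 := by rw [h0', h1']; ring
  have hN' : 2 * ((2 : ℝ) ^ (n - 1) - 2) + 2 * 2 ^ (n - 2) = 2 ^ n + 2 ^ (n - 1) - 4 := by
    rw [h0', h1']; ring
  rw [hN, sub_add_cancel, hN'] at hcharpoly
  refine ⟨hcharpoly, fun μ hμ => ?_⟩
  rw [hcharpoly, mem_roots', IsRoot] at hμ
  simp only [eval_mul, eval_X, eval_pow, eval_sub, eval_C, mul_eq_zero, pow_eq_zero_iff',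
    sub_eq_zero] at hμ
  rcases hμ.2 with ((rfl | ⟨rfl, -⟩) | ⟨rfl, -⟩) | ⟨rfl, -⟩
  · exact ⟨0, by simp⟩
  · exact ⟨2 ^ n - 2, by push_cast; ring⟩
  · exact ⟨2 ^ n, by push_cast; ring⟩
  · exact ⟨2 ^ n + 2 ^ (n - 1) - 4, by push_cast; ring⟩
end

section
/- For $m > 2$ even and $n \geq 1$, the non-commuting graph of the metacyclic group $M_{2mn} = \langle a,b : a^m = b^{2n} = 1, bab^{-1} = a^{-1}\rangle$ is the complete $(\frac{m}{2}+1)$-partite graph $K_{(\frac{m}{2}-1)2n, 2n, 2n, \ldots, 2n}$ with $m/2$ parts of size $2n$. -/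
/-- Relations of the metacyclic group `M_{2mn} = ⟨a, b : a^m = b^(2n) = 1, b a b⁻¹ = a⁻¹⟩`. -/
def mRels (m n : ℕ) : Set (FreeGroup (Fin 2)) :=
  { (FreeGroup.of 0) ^ m, (FreeGroup.of 1) ^ (2 * n),
    FreeGroup.of 1 * FreeGroup.of 0 * (FreeGroup.of 1)⁻¹ * FreeGroup.of 0 }

def noncommGraphCongr {G H : Type*} [Group G] [Group H] (e : G ≃* H) :
    noncommGraph G ≃g noncommGraph H where
  toEquiv := e.subtypeEquiv fun _ => (MulEquivClass.apply_mem_center_iff e).not.symm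
  map_rel_iff' {u v} := by
    change e u * e v ≠ e v * e u ↔ u.1 * v.1 ≠ v.1 * u.1
    rw [← map_mul, ← map_mul, e.injective.ne_iff]

lemma SimpleGraph.nonempty_iso_completeMultipartiteGraph {V ι : Type*} [Finite V]
    {G : SimpleGraph V} (P : V → ι) (hP : ∀ u v, G.Adj u v ↔ P u ≠ P v)
    {β : ι → Type*} [∀ i, Finite (β i)]
    (hcard : ∀ i, Nat.card {v // P v = i} = Nat.card (β i)) :
    Nonempty (G ≃g completeMultipartiteGraph β) :=
  ⟨{ toEquiv := (Equiv.sigmaFiberEquiv P).symm.trans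
        (Equiv.sigmaCongrRight fun i => (Finite.card_eq.mp (hcard i)).some)
     map_rel_iff' := by
       intro u v
       simp [hP, Equiv.sigmaFiberEquiv, Equiv.sigmaCongrRight] }⟩

lemma exists_eq_zpow_mul_zpow_of_mul_mul_inv_eq_inv {G : Type*} [Group G] {A B : G}
    (hAB : B * A * B⁻¹ = A⁻¹) {g : G} (hg : g ∈ Subgroup.closure {A, B}) :
    ∃ i j : ℤ, g = A ^ i * B ^ j := by
  have hB : SemiconjBy B A A⁻¹ := mul_inv_eq_iff_eq_mul.mp hAB
  have hB' : SemiconjBy B⁻¹ A A⁻¹ := by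
    simpa using (SemiconjBy.inv_symm_left_iff.mpr hB).inv_right
  induction hg using Subgroup.closure_induction_left with
  | one => exact ⟨0, 0, by simp⟩
  | mul_left x hx y _ ih =>
    obtain ⟨i, j, rfl⟩ := ih
    rcases hx with rfl | rfl
    · exact ⟨1 + i, j, by rw [zpow_add, zpow_one, mul_assoc]⟩
    · exact ⟨-i, 1 + j, by
        rw [← mul_assoc, (hB.zpow_right i).eq, inv_zpow', zpow_one_add, mul_assoc]⟩
  | inv_mul_cancel x hx y _ ih =>
    obtain ⟨i, j, rfl⟩ := ih
    rcases hx with rfl | rfl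
    · exact ⟨-1 + i, j, by rw [zpow_add, zpow_neg_one, mul_assoc]⟩
    · exact ⟨-i, -1 + j, by
        rw [← mul_assoc, (hB'.zpow_right i).eq, inv_zpow', zpow_add, zpow_neg_one, mul_assoc]⟩

lemma ZMod.card_fiber_castHom_mul {d k : ℕ} (hd : d ∣ k) (r : ZMod d) :
    Nat.card {x : ZMod k // ZMod.castHom hd (ZMod d) x = r} * d = k := by
  let f := (ZMod.castHom hd (ZMod d)).toAddMonoidHom
  have hf : Function.Surjective f := ZMod.castHom_surjective hd
  have e : {x // ZMod.castHom hd (ZMod d) x = r} ≃ f.ker := f.fiberEquivKerOfSurjective hf r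
  rw [Nat.card_congr e]
  conv_rhs => rw [← Nat.card_zmod k, ← f.ker.card_mul_index, AddSubgroup.index_ker,
    f.range_eq_top.mpr hf]
  simp

namespace Metacyclic

def parity (n : ℕ) : ZMod (2 * n) →+* ZMod 2 := ZMod.castHom (dvd_mul_right 2 n) (ZMod 2)

def sign (m : ℕ) {n : ℕ} (y : ZMod (2 * n)) : ZMod m := (-1) ^ (parity n y).val

variable {m n : ℕ}

lemma parity_eq_zero_or_one (y : ZMod (2 * n)) : parity n y = 0 ∨ parity n y = 1 := by
  generalize parity n y = c
  revert c
  decide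

lemma sign_add (y y' : ZMod (2 * n)) : sign m (y + y') = sign m y * sign m y' := by
  rw [sign, sign, sign, map_add, ZMod.val_add, ← neg_one_pow_eq_pow_mod_two, pow_add]

lemma sign_of_parity_eq_zero {y : ZMod (2 * n)} (hy : parity n y = 0) : sign m y = 1 := by
  rw [sign, hy, ZMod.val_zero, pow_zero]

lemma sign_of_parity_eq_one {y : ZMod (2 * n)} (hy : parity n y = 1) : sign m y = -1 := by
  rw [sign, hy, ZMod.val_one, pow_one]

@[simp] lemma sign_zero : sign m (0 : ZMod (2 * n)) = 1 := sign_of_parity_eq_zero (map_zero _)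

@[simp] lemma sign_one : sign m (1 : ZMod (2 * n)) = -1 := sign_of_parity_eq_one (map_one _)

lemma sign_neg (y : ZMod (2 * n)) : sign m (-y) = sign m y := by
  rcases parity_eq_zero_or_one y with hy | hy
  · rw [sign_of_parity_eq_zero hy, sign_of_parity_eq_zero (by rw [map_neg, hy, neg_zero])]
  · rw [sign_of_parity_eq_one hy, sign_of_parity_eq_one (by rw [map_neg, hy]; decide)]

end Metacyclic

@[ext]
structure Metacyclic (m n : ℕ) where
  x : ZMod m
  y : ZMod (2 * n)

namespace Metacyclic

variable {m n : ℕ}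

instance : One (Metacyclic m n) := ⟨⟨0, 0⟩⟩
instance : Mul (Metacyclic m n) := ⟨fun g h => ⟨g.x + sign m g.y * h.x, g.y + h.y⟩⟩
instance : Inv (Metacyclic m n) := ⟨fun g => ⟨-(sign m g.y * g.x), -g.y⟩⟩

@[simp] lemma one_x : (1 : Metacyclic m n).x = 0 := rfl
@[simp] lemma one_y : (1 : Metacyclic m n).y = 0 := rfl
@[simp] lemma mul_x (g h : Metacyclic m n) : (g * h).x = g.x + sign m g.y * h.x := rfl
@[simp] lemma mul_y (g h : Metacyclic m n) : (g * h).y = g.y + h.y := rfl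
@[simp] lemma inv_x (g : Metacyclic m n) : g⁻¹.x = -(sign m g.y * g.x) := rfl
@[simp] lemma inv_y (g : Metacyclic m n) : g⁻¹.y = -g.y := rfl

instance : Group (Metacyclic m n) where
  mul_assoc g h k := by ext <;> simp only [mul_x, mul_y, sign_add] <;> ring
  one_mul g := by ext <;> simp
  mul_one g := by ext <;> simp
  inv_mul_cancel g := by ext <;> simp [sign_neg]

def equivProd : Metacyclic m n ≃ ZMod m × ZMod (2 * n) where
  toFun g := (g.x, g.y)
  invFun p := ⟨p.1, p.2⟩

instance [NeZero m] [NeZero n] : Finite (Metacyclic m n) := Finite.of_equiv _ equivProd.symm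

def a : Metacyclic m n := ⟨1, 0⟩

def b : Metacyclic m n := ⟨0, 1⟩

lemma a_zpow (k : ℤ) : (a : Metacyclic m n) ^ k = ⟨k, 0⟩ := by
  induction k using Int.induction_on with
  | zero => ext <;> simp
  | succ k ih => rw [zpow_add_one, ih]; ext <;> simp [a]
  | pred k ih => rw [zpow_sub_one, ih]; ext <;> simp [a, sub_eq_add_neg]

lemma b_zpow (k : ℤ) : (b : Metacyclic m n) ^ k = ⟨0, k⟩ := by
  induction k using Int.induction_on with
  | zero => ext <;> simp
  | succ k ih => rw [zpow_add_one, ih]; ext <;> simp [b]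
  | pred k ih => rw [zpow_sub_one, ih]; ext <;> simp [b, sub_eq_add_neg]

lemma a_zpow_mul_b_zpow (i j : ℤ) : (a : Metacyclic m n) ^ i * b ^ j = ⟨i, j⟩ := by
  ext <;> simp [a_zpow, b_zpow]

lemma lift_rels_eq_one : ∀ r ∈ mRels m n, FreeGroup.lift ![(a : Metacyclic m n), b] r = 1 := by
  rintro r (rfl | rfl | rfl)
  · rw [map_pow, FreeGroup.lift_apply_of, Matrix.cons_val_zero, ← zpow_natCast, a_zpow]
    ext <;> simp
  · rw [map_pow, FreeGroup.lift_apply_of, Matrix.cons_val_one, Matrix.cons_val_zero,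
      ← zpow_natCast, b_zpow]
    ext
    · rfl
    · exact_mod_cast ZMod.natCast_self (2 * n)
  · ext <;> simp [a, b]

section Presented

local notation "A" => (PresentedGroup.of 0 : PresentedGroup (mRels m n))
local notation "B" => (PresentedGroup.of 1 : PresentedGroup (mRels m n))

lemma presented_a_pow : A ^ m = 1 :=
  PresentedGroup.one_of_mem (x := FreeGroup.of 0 ^ m) (Or.inl rfl)

lemma presented_b_pow : B ^ (2 * n) = 1 :=
  PresentedGroup.one_of_mem (x := FreeGroup.of 1 ^ (2 * n)) (Or.inr (Or.inl rfl))

lemma presented_b_mul_a_mul_b_inv : B * A * B⁻¹ = A⁻¹ :=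
  mul_eq_one_iff_eq_inv.mp (PresentedGroup.one_of_mem (Or.inr (Or.inr rfl)))

lemma presented_exists_eq_zpow_mul_zpow (g : PresentedGroup (mRels m n)) :
    ∃ i j : ℤ, g = A ^ i * B ^ j :=
  exists_eq_zpow_mul_zpow_of_mul_mul_inv_eq_inv presented_b_mul_a_mul_b_inv <|
    PresentedGroup.generated_by _ _ (fun k => by
      fin_cases k
      · exact Subgroup.subset_closure (Set.mem_insert _ _)
      · exact Subgroup.subset_closure (Set.mem_insert_of_mem _ rfl)) g

def ofPresented : PresentedGroup (mRels m n) →* Metacyclic m n :=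
  PresentedGroup.toGroup lift_rels_eq_one

lemma ofPresented_zpow_mul_zpow (i j : ℤ) : ofPresented (A ^ i * B ^ j) = ⟨i, j⟩ := by
  rw [ofPresented, map_mul, map_zpow, map_zpow, PresentedGroup.toGroup.of,
    PresentedGroup.toGroup.of]
  exact a_zpow_mul_b_zpow i j

lemma ofPresented_bijective : Function.Bijective (ofPresented (m := m) (n := n)) := by
  refine ⟨(injective_iff_map_eq_one _).mpr fun g hg => ?_, fun g => ?_⟩
  · obtain ⟨i, j, rfl⟩ := presented_exists_eq_zpow_mul_zpow g
    obtain ⟨hi, hj⟩ := Metacyclic.ext_iff.mp ((ofPresented_zpow_mul_zpow i j).symm.trans hg)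
    obtain ⟨s, rfl⟩ := (ZMod.intCast_zmod_eq_zero_iff_dvd _ _).mp hi
    obtain ⟨t, rfl⟩ := (ZMod.intCast_zmod_eq_zero_iff_dvd _ _).mp hj
    rw [zpow_mul, zpow_mul, zpow_natCast, zpow_natCast, presented_a_pow, presented_b_pow,
      one_zpow, one_zpow, one_mul]
  · refine ⟨A ^ (g.x.cast : ℤ) * B ^ (g.y.cast : ℤ), ?_⟩
    rw [ofPresented_zpow_mul_zpow, ZMod.intCast_zmod_cast, ZMod.intCast_zmod_cast]

end Presented

noncomputable def presentedEquiv : PresentedGroup (mRels m n) ≃* Metacyclic m n :=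
  MulEquiv.ofBijective ofPresented ofPresented_bijective

lemma mul_comm_iff (g h : Metacyclic m n) :
    g * h = h * g ↔ g.x + sign m g.y * h.x = h.x + sign m h.y * g.x := by
  rw [Metacyclic.ext_iff, mul_x, mul_x, mul_y, mul_y, and_iff_left (add_comm _ _)]

lemma mem_center_iff (hm : 2 < m) (g : Metacyclic m n) :
    g ∈ Subgroup.center (Metacyclic m n) ↔ parity n g.y = 0 ∧ 2 * g.x = 0 := by
  have : Fact (2 < m) := ⟨hm⟩
  rw [Subgroup.mem_center_iff]
  constructor
  · intro hg
    have ha := (mul_comm_iff _ _).mp (hg a)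
    have hb := (mul_comm_iff _ _).mp (hg b)
    simp only [a, b, sign_zero, sign_one, mul_zero, add_zero, zero_add, one_mul, mul_one] at ha hb
    refine ⟨(parity_eq_zero_or_one g.y).resolve_right fun hy => ZMod.neg_one_ne_one (n := m) ?_,
      by linear_combination -hb⟩
    rw [sign_of_parity_eq_one hy] at ha
    linear_combination -ha
  · rintro ⟨hy, hx⟩ h
    rw [mul_comm_iff, sign_of_parity_eq_zero hy]
    rcases parity_eq_zero_or_one h.y with hy' | hy'
    · rw [sign_of_parity_eq_zero hy']
      ring
    · rw [sign_of_parity_eq_one hy']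
      linear_combination -hx

lemma card_subtype_and (p : ZMod m → Prop) (q : ZMod (2 * n) → Prop) :
    Nat.card {g : Metacyclic m n // p g.x ∧ q g.y} =
      Nat.card {x // p x} * Nat.card {y // q y} := by
  rw [← Nat.card_prod]
  exact Nat.card_congr
    ((equivProd.subtypeEquiv (q := fun c => p c.1 ∧ q c.2) fun _ => Iff.rfl).trans
      Equiv.subtypeProdEquivProd)

lemma card_parity_fiber (c : ZMod 2) : Nat.card {y : ZMod (2 * n) // parity n y = c} = n := by
  have := ZMod.card_fiber_castHom_mul (dvd_mul_right 2 n) c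
  rw [parity]
  linarith

section Even

variable {h : ℕ}

def halfResidue (h : ℕ) : ZMod (2 * h) →+* ZMod h := ZMod.castHom (dvd_mul_left h 2) (ZMod h)

lemma two_mul_eq_zero_iff (x : ZMod (2 * h)) : 2 * x = 0 ↔ halfResidue h x = 0 := by
  obtain ⟨c, rfl⟩ := ZMod.intCast_surjective x
  have hc : (2 : ZMod (2 * h)) * c = ((2 * c : ℤ) : ZMod (2 * h)) := by push_cast; rfl
  rw [hc, map_intCast, ZMod.intCast_zmod_eq_zero_iff_dvd, ZMod.intCast_zmod_eq_zero_iff_dvd,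
    Nat.cast_mul, Nat.cast_ofNat, mul_dvd_mul_iff_left two_ne_zero]

lemma card_halfResidue_fiber (hh : 0 < h) (r : ZMod h) :
    Nat.card {x : ZMod (2 * h) // halfResidue h x = r} = 2 := by
  have := ZMod.card_fiber_castHom_mul (dvd_mul_left h 2) r
  rw [halfResidue]
  nlinarith

variable [NeZero h]

def part (g : Metacyclic (2 * h) n) : Fin (h + 1) :=
  if parity n g.y = 0 then 0 else ((ZMod.finEquiv h).symm (halfResidue h g.x)).succ

lemma part_eq_zero_iff (g : Metacyclic (2 * h) n) : part g = 0 ↔ parity n g.y = 0 := by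
  unfold part
  split_ifs with hy <;> simp [hy, Fin.succ_ne_zero]

lemma part_eq_succ_iff (g : Metacyclic (2 * h) n) (r : Fin h) :
    part g = r.succ ↔ parity n g.y = 1 ∧ halfResidue h g.x = ZMod.finEquiv h r := by
  unfold part
  rcases parity_eq_zero_or_one g.y with hy | hy
  · simp [hy, (Fin.succ_ne_zero r).symm]
  · simp [hy, Fin.succ_inj, RingEquiv.symm_apply_eq]

lemma mul_comm_iff_part_eq (hh : 1 < h) {g g' : Metacyclic (2 * h) n}
    (hg : g ∉ Subgroup.center _) (hg' : g' ∉ Subgroup.center _) :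
    g * g' = g' * g ↔ part g = part g' := by
  rw [mem_center_iff (by omega), not_and] at hg hg'
  rw [mul_comm_iff, part, part]
  rcases parity_eq_zero_or_one g.y with hy | hy <;>
    rcases parity_eq_zero_or_one g'.y with hy' | hy' <;>
    simp only [sign_of_parity_eq_zero, sign_of_parity_eq_one, hy, hy', if_pos, one_ne_zero,
      if_false]
  · exact iff_of_true (by ring) trivial
  · exact iff_of_false (fun e => hg hy (by linear_combination e)) (Fin.succ_ne_zero _).symm
  · exact iff_of_false (fun e => hg' hy' (by linear_combination -e)) (Fin.succ_ne_zero _)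
  · rw [Fin.succ_inj, (ZMod.finEquiv h).symm.injective.eq_iff,
      ← sub_eq_zero (a := halfResidue h g.x), ← map_sub, ← two_mul_eq_zero_iff]
    constructor <;> intro e <;> linear_combination e

lemma card_noncentral_part_zero (hh : 1 < h) :
    Nat.card {g : Metacyclic (2 * h) n // g ∉ Subgroup.center _ ∧ part g = 0} =
      (h - 1) * (2 * n) := by
  have hiff (g : Metacyclic (2 * h) n) : g ∉ Subgroup.center _ ∧ part g = 0 ↔
      ¬ halfResidue h g.x = 0 ∧ parity n g.y = 0 := by
    rw [mem_center_iff (by omega), part_eq_zero_iff, ← two_mul_eq_zero_iff]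
    tauto
  rw [Nat.card_congr (Equiv.subtypeEquivRight hiff),
    card_subtype_and (fun x => ¬ halfResidue h x = 0) (fun y => parity n y = 0), card_parity_fiber]
  have hsum := Nat.card_congr (Equiv.sumCompl fun x : ZMod (2 * h) => halfResidue h x = 0)
  rw [Nat.card_sum, card_halfResidue_fiber (by omega), Nat.card_zmod] at hsum
  rw [show Nat.card {x // ¬ halfResidue h x = 0} = 2 * (h - 1) by omega]
  ring

lemma card_noncentral_part_succ (hh : 1 < h) (r : Fin h) :
    Nat.card {g : Metacyclic (2 * h) n // g ∉ Subgroup.center _ ∧ part g = r.succ} = 2 * n := by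
  have hiff (g : Metacyclic (2 * h) n) : g ∉ Subgroup.center _ ∧ part g = r.succ ↔
      halfResidue h g.x = ZMod.finEquiv h r ∧ parity n g.y = 1 := by
    rw [mem_center_iff (by omega), part_eq_succ_iff]
    constructor
    · exact fun ⟨_, hy, hx⟩ => ⟨hx, hy⟩
    · rintro ⟨hx, hy⟩
      exact ⟨fun hc => one_ne_zero (hy.symm.trans hc.1), hy, hx⟩
  rw [Nat.card_congr (Equiv.subtypeEquivRight hiff),
    card_subtype_and (fun x => halfResidue h x = _) (fun y => parity n y = 1), card_parity_fiber,
    card_halfResidue_fiber (by omega)]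

lemma nonempty_noncommGraph_iso [NeZero n] (hh : 1 < h) :
    Nonempty (noncommGraph (Metacyclic (2 * h) n) ≃g
      SimpleGraph.completeMultipartiteGraph
        fun i : Fin (h + 1) => Fin (if i = 0 then (h - 1) * (2 * n) else 2 * n)) := by
  refine SimpleGraph.nonempty_iso_completeMultipartiteGraph (fun v => part v.1)
    (fun u v => (mul_comm_iff_part_eq hh u.2 v.2).not) fun i => ?_
  rw [Nat.card_congr
    (Equiv.subtypeSubtypeEquivSubtypeInter (· ∉ Subgroup.center _) (part · = i)), Nat.card_fin]
  cases i using Fin.cases with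
  | zero => rw [if_pos rfl, card_noncentral_part_zero hh]
  | succ r => rw [if_neg (Fin.succ_ne_zero r), card_noncentral_part_succ hh]

end Even

end Metacyclic

/-- For `m > 2` even and `n ≥ 1`, the non-commuting graph of the metacyclic group `M_{2mn}`
is the complete `(m/2+1)`-partite graph `K_{(m/2-1)·2n,2n,…,2n}` with `m/2` parts of
size `2n`. -/
theorem noncommGraph_metacyclic_even (m n : ℕ) (hm : 2 < m) (heven : Even m) (hn : 1 ≤ n) :
    Nonempty (noncommGraph (PresentedGroup (mRels m n)) ≃g
      SimpleGraph.completeMultipartiteGraph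
        fun i : Fin (m / 2 + 1) => Fin (if i = 0 then (m / 2 - 1) * (2 * n) else 2 * n)) := by
  obtain ⟨h, rfl⟩ := even_iff_two_dvd.mp heven
  have : NeZero h := ⟨by omega⟩
  have : NeZero n := ⟨by omega⟩
  rw [Nat.mul_div_cancel_left h two_pos]
  obtain ⟨e⟩ := Metacyclic.nonempty_noncommGraph_iso (n := n) (show 1 < h by omega)
  exact ⟨(noncommGraphCongr Metacyclic.presentedEquiv).trans e⟩
end

section
/- For $n \geq 1$, the distance signless Laplacian spectrum of $K_{2n,2n,2n}$ (the non-commuting graph of the metacyclic group $M_{8n}$) consists of $8n-4$ with multiplicity $3(2n-1)$, $10n-4$ with multiplicity $2$, and $16n-4$ with multiplicity $1$. In particular, this graph is distance signless Laplacian integral for all $n$. -/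
open Polynomial Finset

/-- The distance signless Laplacian matrix `Tr(G) + D(G)`. -/
noncomputable def distSignlessLapMatrix {V : Type*} [Fintype V] [DecidableEq V]
    (G : SimpleGraph V) : Matrix V V ℝ :=
  Matrix.diagonal (fun v => ∑ u, (G.dist v u : ℝ)) + distMatrix G

/-!
For `p` parts of size `m`, distances in the complete multipartite graph are `1` between parts
and `2` inside a part, so every transmission is `(p + 1) m - 2` and
`D^Q = ((p + 1) m - 4) I + B`, where `B u v = K (part u) (part v)` for `K = J_p + I_p`.
The matrix `B` factors through the `p` parts as `B = U W` with `W U = m K`, so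
`χ_B = X ^ (p m - p) χ_{m K}`, and `m K = m J_p + m I_p` is a rank-one matrix shifted by a scalar,
with eigenvalues `m` (multiplicity `p - 1`) and `(p + 1) m`.
-/

namespace Matrix

variable {R : Type*} [CommRing R]

theorem charpoly_add_scalar {n : Type*} [Fintype n] [DecidableEq n] (M : Matrix n n R) (c : R) :
    (M + scalar n c).charpoly = M.charpoly.comp (X - C c) := by
  simpa [sub_eq_add_neg] using charpoly_sub_scalar M (-c)

theorem charpoly_vecMulVec_add_scalar {n : Type*} [Fintype n] [DecidableEq n] [Nonempty n]
    (u v : n → R) (c : R) :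
    (vecMulVec u v + scalar n c).charpoly =
      (X - C c) ^ (Fintype.card n - 1) * (X - C (c + u ⬝ᵥ v)) := by
  have hn : Fintype.card n = Fintype.card n - 1 + 1 := (Nat.sub_add_cancel Fintype.card_pos).symm
  rw [charpoly_add_scalar, charpoly_vecMulVec, hn, Nat.add_sub_cancel]
  simp only [pow_succ, smul_eq_C_mul, sub_comp, mul_comp, pow_comp, X_comp, C_comp, C_add]
  ring

theorem one_submatrix_mul_submatrix {V ι : Type*} [Fintype V] [DecidableEq ι]
    (K : Matrix ι ι R) (f : V → ι) :
    (1 : Matrix ι ι R).submatrix id f * K.submatrix f id =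
      of fun i j => (#{v | f v = i} : R) * K i j := by
  ext i j
  simp only [mul_apply, submatrix_apply, one_apply, id, ite_mul, one_mul, zero_mul, sum_ite,
    sum_const_zero, add_zero, of_apply]
  rw [sum_congr rfl fun v hv => by rw [(mem_filter.mp hv).2.symm], sum_const, nsmul_eq_mul]
  simp_rw [eq_comm]

theorem charpoly_submatrix_of_card_fiber {V ι : Type*} [Fintype V] [DecidableEq V] [Fintype ι]
    [DecidableEq ι] (K : Matrix ι ι R) (f : V → ι) {m : ℕ} (hm : 0 < m)
    (hf : ∀ i, #{v | f v = i} = m) :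
    (K.submatrix f f).charpoly = X ^ (Fintype.card V - Fintype.card ι) * ((m : R) • K).charpoly := by
  have hcard : Fintype.card ι ≤ Fintype.card V := by
    rw [← card_univ, ← card_univ (α := V),
      card_eq_sum_card_fiberwise (f := f) (fun _ _ => mem_univ _)]
    simp only [hf, sum_const, smul_eq_mul]
    exact Nat.le_mul_of_pos_right _ hm
  have hfactor : K.submatrix f f = K.submatrix f id * (1 : Matrix ι ι R).submatrix id f := by
    rw [← submatrix_mul _ _ _ _ _ Function.bijective_id, mul_one]
  rw [hfactor, charpoly_mul_comm_of_le _ _ hcard, one_submatrix_mul_submatrix]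
  congr 2
  ext i j
  simp [hf]

end Matrix

theorem card_filter_sigma_fst_eq {ι α : Type*} [Fintype ι] [DecidableEq ι] [Fintype α] (i : ι) :
    #{v : Σ _ : ι, α | v.1 = i} = Fintype.card α := by
  rw [← Fintype.card_subtype]
  exact Fintype.card_congr (Equiv.sigmaSubtype i)

namespace SimpleGraph

theorem completeMultipartiteGraph_dist {ι : Type*} [DecidableEq ι] [Nontrivial ι] {V : ι → Type*}
    [∀ i, DecidableEq (V i)] [∀ i, Nonempty (V i)] (u v : Σ i, V i) :
    (completeMultipartiteGraph V).dist u v = if u = v then 0 else if u.1 = v.1 then 2 else 1 := by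
  split_ifs with huv hpart
  · simp [huv]
  · obtain ⟨j, hj⟩ := exists_ne u.1
    let w : Σ i, V i := ⟨j, Classical.arbitrary _⟩
    have huw : (completeMultipartiteGraph V).Adj u w := hj.symm
    have hwv : (completeMultipartiteGraph V).Adj w v := fun h => hj (h.trans hpart.symm)
    have hle := dist_le (huw.toWalk.append hwv.toWalk)
    have hlt := (huw.reachable.trans hwv.reachable).one_lt_dist_of_ne_of_not_adj huv
      (fun h => h hpart)
    simp only [Walk.length_append, Walk.length_cons, Walk.length_nil] at hle
    omega
  · exact dist_eq_one_iff_adj.mpr hpart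

variable {ι α : Type*} [DecidableEq ι] [Nontrivial ι] [DecidableEq α] [Nonempty α]

theorem cast_dist_completeMultipartiteGraph (u v : Σ _ : ι, α) :
    ((completeMultipartiteGraph fun _ : ι => α).dist u v : ℝ) =
      1 + (if u.1 = v.1 then 1 else 0) - 2 * (if u = v then 1 else 0) := by
  rw [completeMultipartiteGraph_dist]
  split_ifs <;> simp_all <;> norm_num

variable [Fintype ι] [Fintype α]

theorem sum_completeMultipartiteGraph_dist (u : Σ _ : ι, α) :
    ∑ v, ((completeMultipartiteGraph fun _ : ι => α).dist u v : ℝ) =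
      (Fintype.card ι + 1) * Fintype.card α - 2 := by
  have hpart : ∑ v : Σ _ : ι, α, (if u.1 = v.1 then (1 : ℝ) else 0) = Fintype.card α := by
    rw [Fintype.sum_sigma]
    simp [apply_ite]
  simp only [cast_dist_completeMultipartiteGraph, sum_add_distrib, sum_sub_distrib, ← mul_sum,
    hpart, Fintype.sum_ite_eq, sum_const, card_univ, Fintype.card_sigma]
  simp
  ring

theorem distSignlessLapMatrix_completeMultipartiteGraph :
    distSignlessLapMatrix (completeMultipartiteGraph fun _ : ι => α) =
      (Matrix.vecMulVec 1 1 + 1 : Matrix ι ι ℝ).submatrix Sigma.fst Sigma.fst +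
        Matrix.scalar _ (((Fintype.card ι + 1) * Fintype.card α : ℝ) - 4) := by
  ext u v
  simp only [distSignlessLapMatrix, distMatrix, Matrix.add_apply, Matrix.diagonal_apply,
    Matrix.of_apply, sum_completeMultipartiteGraph_dist]
  simp only [cast_dist_completeMultipartiteGraph, Matrix.submatrix_apply, Matrix.scalar_apply]
  split_ifs <;> simp_all
  ring

theorem charpoly_distSignlessLapMatrix_completeMultipartiteGraph :
    (distSignlessLapMatrix (completeMultipartiteGraph fun _ : ι => α)).charpoly =
      (X - C ((Fintype.card ι + 1) * Fintype.card α - 4 : ℝ)) ^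
          (Fintype.card ι * (Fintype.card α - 1)) *
        (X - C ((Fintype.card ι + 2) * Fintype.card α - 4 : ℝ)) ^ (Fintype.card ι - 1) *
        (X - C (2 * (Fintype.card ι + 1) * Fintype.card α - 4 : ℝ)) := by
  have hK : (Fintype.card α : ℝ) • (Matrix.vecMulVec 1 1 + 1 : Matrix ι ι ℝ) =
      Matrix.vecMulVec (fun _ => (Fintype.card α : ℝ)) 1 +
        Matrix.scalar ι (Fintype.card α : ℝ) := by
    ext i j
    simp [Matrix.one_apply, Matrix.natCast_apply, mul_add]
  have hexp : Fintype.card (Σ _ : ι, α) - Fintype.card ι =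
      Fintype.card ι * (Fintype.card α - 1) := by
    simp [Nat.mul_sub_one]
  rw [distSignlessLapMatrix_completeMultipartiteGraph, Matrix.charpoly_add_scalar,
    Matrix.charpoly_submatrix_of_card_fiber _ _ Fintype.card_pos card_filter_sigma_fst_eq, hK,
    Matrix.charpoly_vecMulVec_add_scalar, hexp]
  simp only [mul_comp, pow_comp, X_comp, sub_comp, C_comp, dotProduct_one, sum_const, card_univ,
    nsmul_eq_mul]
  simp only [map_sub, map_add, map_mul, map_natCast, map_ofNat, map_one]
  ring

end SimpleGraph

/-- For `n ≥ 1`, the distance signless Laplacian spectrum of `K_{2n,2n,2n}` (the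
non-commuting graph of `M_{8n}`) consists of `8n-4` with multiplicity `3(2n-1)`, `10n-4`
with multiplicity `2`, and `16n-4` with multiplicity `1`; in particular this graph is
distance signless Laplacian integral for all `n`. -/
theorem distSignlessLaplacian_spectrum_M8n (n : ℕ) (hn : 1 ≤ n) :
    (distSignlessLapMatrix (SimpleGraph.completeMultipartiteGraph
        fun _ : Fin 3 => Fin (2 * n))).charpoly =
      (X - C (8 * (n : ℝ) - 4)) ^ (3 * (2 * n - 1)) * (X - C (10 * (n : ℝ) - 4)) ^ 2 *
        (X - C (16 * (n : ℝ) - 4)) ∧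
    ∀ μ ∈ (distSignlessLapMatrix (SimpleGraph.completeMultipartiteGraph
        fun _ : Fin 3 => Fin (2 * n))).charpoly.roots,
      ∃ z : ℤ, μ = (z : ℝ) := by
  have : Nonempty (Fin (2 * n)) := ⟨⟨0, by omega⟩⟩
  have hcp : (distSignlessLapMatrix (SimpleGraph.completeMultipartiteGraph
      fun _ : Fin 3 => Fin (2 * n))).charpoly =
      (X - C (8 * (n : ℝ) - 4)) ^ (3 * (2 * n - 1)) * (X - C (10 * (n : ℝ) - 4)) ^ 2 *
        (X - C (16 * (n : ℝ) - 4)) := by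
    rw [SimpleGraph.charpoly_distSignlessLapMatrix_completeMultipartiteGraph]
    simp only [Fintype.card_fin]
    push_cast
    ring_nf
  refine ⟨hcp, fun μ hμ => ?_⟩
  have hroot := (mem_roots (Matrix.charpoly_monic _).ne_zero).mp hμ
  simp only [hcp, IsRoot, eval_mul, eval_pow, eval_sub, eval_X, eval_C, mul_eq_zero,
    pow_eq_zero_iff', sub_eq_zero] at hroot
  rcases hroot with ((⟨h, -⟩ | ⟨h, -⟩) | h) <;> rw [h]
  exacts [⟨8 * n - 4, by push_cast; ring⟩, ⟨10 * n - 4, by push_cast; ring⟩,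
    ⟨16 * n - 4, by push_cast; ring⟩]
end
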